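/- Let L be a Lie conformal superalgebra with trivial center Z(L) = 0 and let A be a unital associative commutative ℂ-algebra with a basis {b_t : t ∈ T}. Suppose that every linear super-commuting map on L belongs to the centroid Cent(L). Then every homogeneous linear super-commuting map Ψ on the current Lie conformal superalgebra L ⊗ A belongs to Cent(L ⊗ A); in particular Ψ_λ[(u ⊗ a)_μ (v ⊗ b)] = (−1)^{|Ψ||u|}[(u ⊗ a)_μ Ψ_λ(v ⊗ b)] for all homogeneous u, v ∈ L and a, b ∈ A. -/

import Mathlib

open scoped TensorProduct

noncomputable section

/-- The sign `(−1)^i` for a parity `i : ZMod 2`. -/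
def sg (i : ZMod 2) : ℂ := if i = 0 then 1 else -1

/-- A finitely supported family `f : ℕ →₀ L` encodes the polynomial `∑ₙ λ^n • (f n)`
in `ℂ[λ] ⊗ L`; this evaluates it at `lam : ℂ`. -/
def evalPoly {L : Type*} [AddCommGroup L] [Module ℂ L] (lam : ℂ) (f : ℕ →₀ L) : L :=
  f.sum fun n c => lam ^ n • c

/-- Evaluation of the polynomial encoded by `f : ℕ →₀ L` at an operator `T`
(used to substitute expressions like `−λ−∂` for the formal variable). -/
def evalPolyOp {L : Type*} [AddCommGroup L] [Module ℂ L] (T : Module.End ℂ L)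
    (f : ℕ →₀ L) : L :=
  f.sum fun n c => (T ^ n) c

/-- A Lie conformal superalgebra: a `ℤ/2`-graded `ℂ[∂]`-module with a λ-bracket
`[x_λ y] = ∑ₙ λ^n • (coeff x y n)` satisfying conformal sesquilinearity, skew-symmetry
and the graded Jacobi identity. -/
structure LieConformalSuperAlgebra (L : Type*) [AddCommGroup L] [Module ℂ L] where
  /-- the operator `∂` -/
  D : L →ₗ[ℂ] L
  /-- the `ℤ/2`-grading `L = L₀ ⊕ L₁` -/
  grading : ZMod 2 → Submodule ℂ L
  isInternal : DirectSum.IsInternal grading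
  D_mem : ∀ (i : ZMod 2) (x : L), x ∈ grading i → D x ∈ grading i
  /-- coefficients of the λ-bracket: `[x_λ y] = ∑ₙ λ^n • coeff x y n` -/
  coeff : L →ₗ[ℂ] L →ₗ[ℂ] (ℕ →₀ L)
  coeff_mem : ∀ (i j : ZMod 2) (x y : L), x ∈ grading i → y ∈ grading j →
    ∀ n, coeff x y n ∈ grading (i + j)
  /-- `[∂x_λ y] = −λ [x_λ y]` -/
  sesq₁ : ∀ (lam : ℂ) (x y : L),
    evalPoly lam (coeff (D x) y) = (-lam) • evalPoly lam (coeff x y)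
  /-- `[x_λ ∂y] = (∂+λ) [x_λ y]` -/
  sesq₂ : ∀ (lam : ℂ) (x y : L),
    evalPoly lam (coeff x (D y)) = D (evalPoly lam (coeff x y)) + lam • evalPoly lam (coeff x y)
  /-- `[x_λ y] = −(−1)^{|x||y|} [y_{−λ−∂} x]` -/
  skew : ∀ (i j : ZMod 2) (x y : L), x ∈ grading i → y ∈ grading j → ∀ lam : ℂ,
    evalPoly lam (coeff x y)
      = -(sg (i * j)) • evalPolyOp ((-lam) • (1 : Module.End ℂ L) - D) (coeff y x)
  /-- `[x_λ [y_μ z]] = [[x_λ y]_{λ+μ} z] + (−1)^{|x||y|} [y_μ [x_λ z]]` -/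
  jacobi : ∀ (i j : ZMod 2) (x y z : L), x ∈ grading i → y ∈ grading j → ∀ lam mu : ℂ,
    evalPoly lam (coeff x (evalPoly mu (coeff y z)))
      = evalPoly (lam + mu) (coeff (evalPoly lam (coeff x y)) z)
        + sg (i * j) • evalPoly mu (coeff y (evalPoly lam (coeff x z)))

namespace LieConformalSuperAlgebra

variable {L : Type*} [AddCommGroup L] [Module ℂ L]

/-- The λ-bracket `[x_λ y]`, evaluated at `lam : ℂ`. -/
def brk (S : LieConformalSuperAlgebra L) (lam : ℂ) (x y : L) : L :=
  evalPoly lam (S.coeff x y)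

/-- The λ-bracket with an operator (e.g. `−λ−μ−∂`) substituted for the formal variable. -/
def brkOp (S : LieConformalSuperAlgebra L) (T : Module.End ℂ L) (x y : L) : L :=
  evalPolyOp T (S.coeff x y)

/-- The center `Z(L) = {x : [x_λ y] = 0 for all λ, y}`. -/
def center (S : LieConformalSuperAlgebra L) : Set L :=
  {x : L | ∀ (lam : ℂ) (y : L), S.brk lam x y = 0}

/-- `L` is perfect: it is spanned, as a `ℂ[∂]`-module, by the coefficients of all
brackets `[x_λ y]`. -/
def IsPerfect (S : LieConformalSuperAlgebra L) : Prop :=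
  Submodule.span ℂ
    {z : L | ∃ (x y : L) (n k : ℕ), z = ((S.D : Module.End ℂ L) ^ k) (S.coeff x y n)} = ⊤

end LieConformalSuperAlgebra

/-- A conformal super-biderivation `φ_λ(x,y) = ∑ₙ λ^n • coeff x y n` of parity `parity`:
a conformal bilinear map, compatible with the grading shifted by `parity`, which is
skew-symmetric and a conformal derivation in its second argument. -/
structure SuperBiderivation {L : Type*} [AddCommGroup L] [Module ℂ L]
    (S : LieConformalSuperAlgebra L) where
  coeff : L →ₗ[ℂ] L →ₗ[ℂ] (ℕ →₀ L)
  parity : ZMod 2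
  mem : ∀ (i j : ZMod 2) (x y : L), x ∈ S.grading i → y ∈ S.grading j →
    ∀ n, coeff x y n ∈ S.grading (i + j + parity)
  /-- `φ_λ(∂x, y) = −λ φ_λ(x, y)` -/
  conf₁ : ∀ (lam : ℂ) (x y : L),
    evalPoly lam (coeff (S.D x) y) = (-lam) • evalPoly lam (coeff x y)
  /-- `φ_λ(x, ∂y) = (∂+λ) φ_λ(x, y)` -/
  conf₂ : ∀ (lam : ℂ) (x y : L),
    evalPoly lam (coeff x (S.D y))
      = S.D (evalPoly lam (coeff x y)) + lam • evalPoly lam (coeff x y)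
  /-- `φ_λ(x,y) = −(−1)^{|x||y|} φ_{−∂−λ}(y,x)` -/
  skew : ∀ (i j : ZMod 2) (x y : L), x ∈ S.grading i → y ∈ S.grading j → ∀ lam : ℂ,
    evalPoly lam (coeff x y)
      = -(sg (i * j)) • evalPolyOp ((-lam) • (1 : Module.End ℂ L) - S.D) (coeff y x)
  /-- `φ_λ(x,[y_μ z]) = [φ_λ(x,y)_{λ+μ} z] + (−1)^{|x||y|} [y_μ φ_λ(x,z)]` -/
  deriv : ∀ (i j : ZMod 2) (x y z : L), x ∈ S.grading i → y ∈ S.grading j → ∀ lam mu : ℂ,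
    evalPoly lam (coeff x (S.brk mu y z))
      = S.brk (lam + mu) (evalPoly lam (coeff x y)) z
        + sg (i * j) • S.brk mu y (evalPoly lam (coeff x z))

/-- `φ_λ(x, y)` evaluated at `lam : ℂ`. -/
def SuperBiderivation.app {L : Type*} [AddCommGroup L] [Module ℂ L]
    {S : LieConformalSuperAlgebra L} (φ : SuperBiderivation S) (lam : ℂ) (x y : L) : L :=
  evalPoly lam (φ.coeff x y)

/-- An element of the centroid `Cent(L)`: a homogeneous conformal linear map
`α_λ : L → ℂ[λ] ⊗ L` of parity `parity` with `α_λ([x_μ y]) = (−1)^{|x||α|} [x_μ α_λ(y)]`. -/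
structure CentroidElem {L : Type*} [AddCommGroup L] [Module ℂ L]
    (S : LieConformalSuperAlgebra L) where
  coeff : L →ₗ[ℂ] (ℕ →₀ L)
  parity : ZMod 2
  mem : ∀ (i : ZMod 2) (x : L), x ∈ S.grading i → ∀ n, coeff x n ∈ S.grading (i + parity)
  /-- conformal linearity: `α_λ(∂x) = (∂+λ) α_λ(x)` -/
  conf : ∀ (lam : ℂ) (x : L),
    evalPoly lam (coeff (S.D x)) = S.D (evalPoly lam (coeff x)) + lam • evalPoly lam (coeff x)
  /-- `α_λ([x_μ y]) = (−1)^{|x||α|} [x_μ α_λ(y)]` -/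
  central : ∀ (i : ZMod 2) (x y : L), x ∈ S.grading i → ∀ lam mu : ℂ,
    evalPoly lam (coeff (S.brk mu x y)) = sg (i * parity) • S.brk mu x (evalPoly lam (coeff y))

/-- `α_λ(x)` evaluated at `lam : ℂ`. -/
def CentroidElem.app {L : Type*} [AddCommGroup L] [Module ℂ L]
    {S : LieConformalSuperAlgebra L} (α : CentroidElem S) (lam : ℂ) (x : L) : L :=
  evalPoly lam (α.coeff x)

/-- A homogeneous linear super-commuting map: a conformal linear map `Ψ_λ` of parity
`parity`, shifting the grading by `parity`, with `[Ψ_λ(u)_{λ+μ} u] = 0` for all `u`. -/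
structure SuperCommutingMap {L : Type*} [AddCommGroup L] [Module ℂ L]
    (S : LieConformalSuperAlgebra L) where
  coeff : L →ₗ[ℂ] (ℕ →₀ L)
  parity : ZMod 2
  mem : ∀ (i : ZMod 2) (x : L), x ∈ S.grading i → ∀ n, coeff x n ∈ S.grading (i + parity)
  /-- conformal linearity: `Ψ_λ(∂x) = (∂+λ) Ψ_λ(x)` -/
  conf : ∀ (lam : ℂ) (x : L),
    evalPoly lam (coeff (S.D x)) = S.D (evalPoly lam (coeff x)) + lam • evalPoly lam (coeff x)
  /-- `[Ψ_λ(u)_{λ+μ} u] = 0` -/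
  commuting : ∀ (lam mu : ℂ) (u : L), S.brk (lam + mu) (evalPoly lam (coeff u)) u = 0

/-- `Ψ_λ(x)` evaluated at `lam : ℂ`. -/
def SuperCommutingMap.app {L : Type*} [AddCommGroup L] [Module ℂ L]
    {S : LieConformalSuperAlgebra L} (Ψ : SuperCommutingMap S) (lam : ℂ) (x : L) : L :=
  evalPoly lam (Ψ.coeff x)

/-- The `t`-th component map `L ⊗ A → L` relative to a basis `B` of `A`:
if `w = ∑ₜ wₜ ⊗ bₜ` then `tensorComponent B t w = wₜ`. -/
def tensorComponent {L : Type*} [AddCommGroup L] [Module ℂ L]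
    {A : Type*} [CommRing A] [Algebra ℂ A] {ι : Type*} (B : Module.Basis ι ℂ A) (t : ι) :
    L ⊗[ℂ] A →ₗ[ℂ] L :=
  (TensorProduct.rid ℂ L).toLinearMap ∘ₗ
    TensorProduct.map (LinearMap.id : L →ₗ[ℂ] L) (B.coord t)


/-! Polarizing `[Ψ_λ(u)_{λ+μ} u] = 0` gives `[Ψ_λ(w)_ν z] = −[Ψ_λ(z)_ν w]`. Since `Z(L) = 0`,
an element of `L ⊗ A` is determined by its brackets with `L ⊗ 1`, so polarization shows that `Ψ`
commutes with multiplication by `A` on the second factor. The coordinates `x ↦ (Ψ_λ(x ⊗ 1))_t`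
with respect to the basis of `A` are super-commuting maps on `L`, hence lie in `Cent(L)`; this is
the centroid identity on `L ⊗ 1`, and `A`-linearity of `Ψ` and of the bracket extends it to
`L ⊗ A`. -/

section

variable {L : Type*} [AddCommGroup L] [Module ℂ L]

def evalPolyₗ (lam : ℂ) : (ℕ →₀ L) →ₗ[ℂ] L :=
  Finsupp.lsum ℂ fun n => lam ^ n • LinearMap.id

@[simp]
theorem evalPolyₗ_apply (lam : ℂ) (f : ℕ →₀ L) : evalPolyₗ lam f = evalPoly lam f := by
  simp [evalPoly, evalPolyₗ, Finsupp.lsum_apply, Finsupp.sum]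

theorem evalPoly_mapRange {M : Type*} [AddCommGroup M] [Module ℂ M]
    (f : L →ₗ[ℂ] M) (lam : ℂ) (p : ℕ →₀ L) :
    evalPoly lam (Finsupp.mapRange.linearMap f p) = f (evalPoly lam p) := by
  simp [evalPoly, Finsupp.sum_mapRange_index, map_finsuppSum]

namespace LieConformalSuperAlgebra

variable (S : LieConformalSuperAlgebra L)

def brkₗ (lam : ℂ) : L →ₗ[ℂ] L →ₗ[ℂ] L :=
  S.coeff.compr₂ (evalPolyₗ lam)

@[simp]
theorem brkₗ_apply (lam : ℂ) (x y : L) : S.brkₗ lam x y = S.brk lam x y :=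
  evalPolyₗ_apply lam _

theorem brk_add_left (lam : ℂ) (x x' y : L) :
    S.brk lam (x + x') y = S.brk lam x y + S.brk lam x' y := by
  simp only [← brkₗ_apply, map_add, LinearMap.add_apply]

theorem brk_add_right (lam : ℂ) (x y y' : L) :
    S.brk lam x (y + y') = S.brk lam x y + S.brk lam x y' := by
  simp only [← brkₗ_apply, map_add]

theorem brk_sub_left (lam : ℂ) (x x' y : L) :
    S.brk lam (x - x') y = S.brk lam x y - S.brk lam x' y := by
  simp only [← brkₗ_apply, map_sub, LinearMap.sub_apply]

theorem brk_smul_left (lam c : ℂ) (x y : L) : S.brk lam (c • x) y = c • S.brk lam x y := by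
  simp only [← brkₗ_apply, map_smul, LinearMap.smul_apply]

theorem brk_smul_right (lam c : ℂ) (x y : L) : S.brk lam x (c • y) = c • S.brk lam x y := by
  simp only [← brkₗ_apply, map_smul]

@[simp]
theorem brk_zero_left (lam : ℂ) (y : L) : S.brk lam 0 y = 0 := by
  simp only [← brkₗ_apply, map_zero, LinearMap.zero_apply]

@[simp]
theorem brk_zero_right (lam : ℂ) (x : L) : S.brk lam x 0 = 0 := by
  simp only [← brkₗ_apply, map_zero]

end LieConformalSuperAlgebra

namespace SuperCommutingMap

variable {S : LieConformalSuperAlgebra L} (Ψ : SuperCommutingMap S)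

theorem app_add (lam : ℂ) (w z : L) : Ψ.app lam (w + z) = Ψ.app lam w + Ψ.app lam z := by
  simp only [app, map_add, ← evalPolyₗ_apply]

@[simp]
theorem app_zero (lam : ℂ) : Ψ.app lam (0 : L) = 0 := by
  simp only [app, map_zero, ← evalPolyₗ_apply]

theorem brk_app_swap (lam nu : ℂ) (w z : L) :
    S.brk nu (Ψ.app lam w) z = -S.brk nu (Ψ.app lam z) w := by
  have hcomm (u : L) : S.brk nu (Ψ.app lam u) u = 0 := by
    simpa [app] using Ψ.commuting lam (nu - lam) u
  have := hcomm (w + z)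
  rw [Ψ.app_add, S.brk_add_left, S.brk_add_right, S.brk_add_right, hcomm, hcomm,
    zero_add, add_zero] at this
  exact eq_neg_of_add_eq_zero_left this

end SuperCommutingMap

def SuperCommutingMap.MemCentroid {S : LieConformalSuperAlgebra L} (Ψ : SuperCommutingMap S) :
    Prop :=
  ∀ (i : ZMod 2) (x y : L), x ∈ S.grading i → ∀ lam mu : ℂ,
    Ψ.app lam (S.brk mu x y) = sg (i * Ψ.parity) • S.brk mu x (Ψ.app lam y)

variable {A : Type*} [CommRing A] [Algebra ℂ A] {ι : Type*}

theorem tensorComponent_tmul (B : Module.Basis ι ℂ A) (t : ι) (x : L) (a : A) :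
    tensorComponent B t (x ⊗ₜ[ℂ] a) = B.repr a t • x := by
  simp [tensorComponent]

theorem ext_tensorComponent (B : Module.Basis ι ℂ A) {w z : L ⊗[ℂ] A}
    (h : ∀ t, tensorComponent B t w = tensorComponent B t z) : w = z := by
  classical
  have hcoord (u : L ⊗[ℂ] A) (t : ι) :
      tensorComponent B t u = TensorProduct.equivFinsuppOfBasisRight B u t := by
    induction u using TensorProduct.induction_on with
    | zero => simp
    | tmul x a => simp [tensorComponent_tmul]
    | add u v hu hv => simp [hu, hv]
  exact (TensorProduct.equivFinsuppOfBasisRight B).injective <| Finsupp.ext fun t => by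
    simpa only [hcoord] using h t

theorem tensorComponent_mem (B : Module.Basis ι ℂ A) (t : ι) {P : Submodule ℂ L}
    {w : L ⊗[ℂ] A} (hw : w ∈ LinearMap.range (TensorProduct.map P.subtype LinearMap.id)) :
    tensorComponent B t w ∈ P := by
  obtain ⟨w, rfl⟩ := hw
  induction w using TensorProduct.induction_on with
  | zero => simp
  | tmul x a => simpa [tensorComponent_tmul] using P.smul_mem _ x.2
  | add w z hw hz => simpa only [map_add] using P.add_mem hw hz

theorem tensorComponent_rTensor {M : Type*} [AddCommGroup M] [Module ℂ M] (f : L →ₗ[ℂ] M)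
    (B : Module.Basis ι ℂ A) (t : ι) (w : L ⊗[ℂ] A) :
    tensorComponent B t (f.rTensor A w) = f (tensorComponent B t w) := by
  induction w using TensorProduct.induction_on with
  | zero => simp
  | tmul x a => simp [tensorComponent_tmul]
  | add w z hw hz => simp only [map_add, hw, hz]

namespace LieConformalSuperAlgebra

def IsCurrentBracket (S : LieConformalSuperAlgebra L)
    (T : LieConformalSuperAlgebra (L ⊗[ℂ] A)) : Prop :=
  ∀ (lam : ℂ) (x y : L) (a b : A),
    T.brk lam (x ⊗ₜ[ℂ] a) (y ⊗ₜ[ℂ] b) = S.brk lam x y ⊗ₜ[ℂ] (a * b)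

namespace IsCurrentBracket

variable {S : LieConformalSuperAlgebra L} {T : LieConformalSuperAlgebra (L ⊗[ℂ] A)}

theorem brk_lTensor_mulLeft_left (hbrk : S.IsCurrentBracket T) (d : A) (nu : ℂ)
    (w z : L ⊗[ℂ] A) :
    T.brk nu ((LinearMap.mulLeft ℂ d).lTensor L w) z
      = (LinearMap.mulLeft ℂ d).lTensor L (T.brk nu w z) := by
  induction w using TensorProduct.induction_on with
  | zero => simp
  | add w w' hw hw' => simp only [map_add, T.brk_add_left, hw, hw']
  | tmul x a =>
    induction z using TensorProduct.induction_on with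
    | zero => simp
    | add z z' hz hz' => simp only [map_add, T.brk_add_right, hz, hz']
    | tmul y b => simp [hbrk nu, mul_assoc]

theorem brk_lTensor_mulLeft_right (hbrk : S.IsCurrentBracket T) (d : A) (nu : ℂ)
    (w z : L ⊗[ℂ] A) :
    T.brk nu w ((LinearMap.mulLeft ℂ d).lTensor L z)
      = (LinearMap.mulLeft ℂ d).lTensor L (T.brk nu w z) := by
  induction w using TensorProduct.induction_on with
  | zero => simp
  | add w w' hw hw' => simp only [map_add, T.brk_add_left, hw, hw']
  | tmul x a =>
    induction z using TensorProduct.induction_on with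
    | zero => simp
    | add z z' hz hz' => simp only [map_add, T.brk_add_right, hz, hz']
    | tmul y b => simp [hbrk nu, mul_left_comm]

theorem tensorComponent_brk_tmul_one (hbrk : S.IsCurrentBracket T) (B : Module.Basis ι ℂ A)
    (t : ι) (nu : ℂ) (w : L ⊗[ℂ] A) (y : L) :
    tensorComponent B t (T.brk nu w (y ⊗ₜ[ℂ] 1)) = S.brk nu (tensorComponent B t w) y := by
  induction w using TensorProduct.induction_on with
  | zero => simp
  | tmul x a => simp [hbrk nu, tensorComponent_tmul, S.brk_smul_left]
  | add w w' hw hw' => simp only [map_add, T.brk_add_left, S.brk_add_left, hw, hw']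

theorem tensorComponent_brk_one_tmul (hbrk : S.IsCurrentBracket T) (B : Module.Basis ι ℂ A)
    (t : ι) (nu : ℂ) (x : L) (w : L ⊗[ℂ] A) :
    tensorComponent B t (T.brk nu (x ⊗ₜ[ℂ] 1) w) = S.brk nu x (tensorComponent B t w) := by
  induction w using TensorProduct.induction_on with
  | zero => simp
  | tmul y b => simp [hbrk nu, tensorComponent_tmul, S.brk_smul_right]
  | add w w' hw hw' => simp only [map_add, T.brk_add_right, S.brk_add_right, hw, hw']

theorem eq_zero_of_brk_tmul_one (hbrk : S.IsCurrentBracket T)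
    (hZ : ∀ x : L, x ∈ S.center → x = 0) (B : Module.Basis ι ℂ A) {w : L ⊗[ℂ] A}
    (hw : ∀ (nu : ℂ) (y : L), T.brk nu w (y ⊗ₜ[ℂ] 1) = 0) : w = 0 :=
  ext_tensorComponent B fun t => by
    rw [map_zero]
    refine hZ _ fun nu y => ?_
    rw [← hbrk.tensorComponent_brk_tmul_one, hw, map_zero]

end IsCurrentBracket

theorem tmul_mem_grading {S : LieConformalSuperAlgebra L}
    {T : LieConformalSuperAlgebra (L ⊗[ℂ] A)}
    (hgr : ∀ i : ZMod 2, T.grading i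
      = LinearMap.range (TensorProduct.map (S.grading i).subtype (LinearMap.id : A →ₗ[ℂ] A)))
    {i : ZMod 2} {x : L} (hx : x ∈ S.grading i) (a : A) : x ⊗ₜ[ℂ] a ∈ T.grading i :=
  hgr i ▸ ⟨⟨x, hx⟩ ⊗ₜ[ℂ] a, rfl⟩

structure IsCurrent (S : LieConformalSuperAlgebra L) (T : LieConformalSuperAlgebra (L ⊗[ℂ] A)) :
    Prop where
  D_tmul : ∀ (x : L) (a : A), T.D (x ⊗ₜ[ℂ] a) = S.D x ⊗ₜ[ℂ] a
  grading_eq : ∀ i : ZMod 2, T.grading i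
    = LinearMap.range (TensorProduct.map (S.grading i).subtype (LinearMap.id : A →ₗ[ℂ] A))
  brk_tmul : S.IsCurrentBracket T

end LieConformalSuperAlgebra

namespace SuperCommutingMap

variable {S : LieConformalSuperAlgebra L} {T : LieConformalSuperAlgebra (L ⊗[ℂ] A)}

def component (hT : S.IsCurrent T) (B : Module.Basis ι ℂ A) (Ψ : SuperCommutingMap T) (t : ι) :
    SuperCommutingMap S where
  coeff :=
    Finsupp.mapRange.linearMap (tensorComponent B t) ∘ₗ Ψ.coeff ∘ₗ
      (TensorProduct.mk ℂ L A).flip 1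
  parity := Ψ.parity
  mem i x hx n := by
    have := Ψ.mem i _ (S.tmul_mem_grading hT.grading_eq hx 1) n
    rw [hT.grading_eq] at this
    exact tensorComponent_mem B t this
  conf lam x := by
    have hD : T.D = S.D.rTensor A := TensorProduct.ext' hT.D_tmul
    simp only [LinearMap.coe_comp, Function.comp_apply, evalPoly_mapRange, LinearMap.flip_apply,
      TensorProduct.mk_apply]
    rw [← hT.D_tmul, Ψ.conf, map_add, map_smul, hD, tensorComponent_rTensor]
  commuting lam mu u := by
    simp only [LinearMap.coe_comp, Function.comp_apply, evalPoly_mapRange]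
    exact (hT.brk_tmul.tensorComponent_brk_tmul_one B t _ _ u).symm.trans <| by
      simpa using congrArg (tensorComponent B t) (Ψ.commuting lam mu (u ⊗ₜ[ℂ] 1))

theorem component_app (hT : S.IsCurrent T) (B : Module.Basis ι ℂ A) (Ψ : SuperCommutingMap T)
    (t : ι) (lam : ℂ) (x : L) :
    (Ψ.component hT B t).app lam x = tensorComponent B t (Ψ.app lam (x ⊗ₜ[ℂ] 1)) :=
  evalPoly_mapRange _ _ _

variable (Ψ : SuperCommutingMap T)

theorem app_lTensor_mulLeft (hbrk : S.IsCurrentBracket T) (hZ : ∀ x : L, x ∈ S.center → x = 0)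
    (B : Module.Basis ι ℂ A) (d : A) (lam : ℂ) (w : L ⊗[ℂ] A) :
    Ψ.app lam ((LinearMap.mulLeft ℂ d).lTensor L w)
      = (LinearMap.mulLeft ℂ d).lTensor L (Ψ.app lam w) := by
  refine sub_eq_zero.mp (hbrk.eq_zero_of_brk_tmul_one hZ B fun nu y => ?_)
  rw [T.brk_sub_left, sub_eq_zero, Ψ.brk_app_swap, hbrk.brk_lTensor_mulLeft_right, ← map_neg,
    ← Ψ.brk_app_swap, hbrk.brk_lTensor_mulLeft_left]

theorem app_brk_tmul_one (hT : S.IsCurrent T) (B : Module.Basis ι ℂ A)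
    (hcomp : ∀ t, (Ψ.component hT B t).MemCentroid)
    {i : ZMod 2} {x : L} (hx : x ∈ S.grading i) (y : L) (lam mu : ℂ) :
    Ψ.app lam (T.brk mu (x ⊗ₜ[ℂ] 1) (y ⊗ₜ[ℂ] 1))
      = sg (i * Ψ.parity) • T.brk mu (x ⊗ₜ[ℂ] 1) (Ψ.app lam (y ⊗ₜ[ℂ] 1)) := by
  refine ext_tensorComponent B fun t => ?_
  have := hcomp t i x y hx lam mu
  rw [component_app, component_app] at this
  rw [hT.brk_tmul mu, mul_one, map_smul, hT.brk_tmul.tensorComponent_brk_one_tmul]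
  exact this

theorem app_brk_tmul_tmul (hT : S.IsCurrent T) (hZ : ∀ x : L, x ∈ S.center → x = 0)
    (B : Module.Basis ι ℂ A) (hcomp : ∀ t, (Ψ.component hT B t).MemCentroid)
    {i : ZMod 2} {x : L} (hx : x ∈ S.grading i) (y : L) (a b : A) (lam mu : ℂ) :
    Ψ.app lam (T.brk mu (x ⊗ₜ[ℂ] a) (y ⊗ₜ[ℂ] b))
      = sg (i * Ψ.parity) • T.brk mu (x ⊗ₜ[ℂ] a) (Ψ.app lam (y ⊗ₜ[ℂ] b)) := by
  have hmul (z : L) (c : A) :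
      z ⊗ₜ[ℂ] c = (LinearMap.mulLeft ℂ c).lTensor L (z ⊗ₜ[ℂ] 1) := by
    simp
  rw [hmul x a, hmul y b]
  have hbrk := hT.brk_tmul
  simp only [hbrk.brk_lTensor_mulLeft_left, hbrk.brk_lTensor_mulLeft_right,
    Ψ.app_lTensor_mulLeft hbrk hZ B, Ψ.app_brk_tmul_one hT B hcomp hx, map_smul]

theorem memCentroid_of_component (hT : S.IsCurrent T) (hZ : ∀ x : L, x ∈ S.center → x = 0)
    (B : Module.Basis ι ℂ A) (hcomp : ∀ t, (Ψ.component hT B t).MemCentroid) :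
    Ψ.MemCentroid := by
  intro i w z hw lam mu
  rw [hT.grading_eq] at hw
  obtain ⟨w, rfl⟩ := hw
  induction w using TensorProduct.induction_on with
  | zero => simp
  | add w w' hw hw' => simp only [map_add, T.brk_add_left, Ψ.app_add, hw, hw', smul_add]
  | tmul x a =>
    induction z using TensorProduct.induction_on with
    | zero => simp
    | add z z' hz hz' => simp only [T.brk_add_right, Ψ.app_add, hz, hz', smul_add]
    | tmul y b => exact Ψ.app_brk_tmul_tmul hT hZ B hcomp x.2 y a b lam mu

end SuperCommutingMap

end

/-- Suppose `Z(L) = 0` and every linear super-commuting map on `L`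
belongs to `Cent(L)`.  Then every homogeneous linear super-commuting map `Ψ` on the
current algebra `L ⊗ A` belongs to `Cent(L ⊗ A)`; in particular
`Ψ_λ[(u⊗a)_μ (v⊗b)] = (−1)^{|Ψ||u|} [(u⊗a)_μ Ψ_λ(v⊗b)]`. -/
theorem current_commutingMap_is_centroid {L : Type*} [AddCommGroup L] [Module ℂ L]
    (S : LieConformalSuperAlgebra L)
    {A : Type*} [CommRing A] [Algebra ℂ A]
    (T : LieConformalSuperAlgebra (L ⊗[ℂ] A))
    (hD : ∀ (x : L) (a : A), T.D (x ⊗ₜ[ℂ] a) = S.D x ⊗ₜ[ℂ] a)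
    (hgr : ∀ i : ZMod 2, T.grading i
      = LinearMap.range
          (TensorProduct.map (S.grading i).subtype (LinearMap.id : A →ₗ[ℂ] A)))
    (hbrk : ∀ (lam : ℂ) (x y : L) (a b : A),
      T.brk lam (x ⊗ₜ[ℂ] a) (y ⊗ₜ[ℂ] b) = (S.brk lam x y) ⊗ₜ[ℂ] (a * b))
    (hZ : ∀ x : L, x ∈ S.center → x = 0)
    {ι : Type*} (B : Module.Basis ι ℂ A)
    (hcent : ∀ Ψ' : SuperCommutingMap S, ∀ (i : ZMod 2) (x y : L), x ∈ S.grading i →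
      ∀ lam mu : ℂ,
        Ψ'.app lam (S.brk mu x y) = sg (i * Ψ'.parity) • S.brk mu x (Ψ'.app lam y))
    (Ψ : SuperCommutingMap T) :
    (∀ (i : ZMod 2) (w z : L ⊗[ℂ] A), w ∈ T.grading i → ∀ lam mu : ℂ,
      Ψ.app lam (T.brk mu w z) = sg (i * Ψ.parity) • T.brk mu w (Ψ.app lam z)) ∧
    (∀ (i j : ZMod 2) (u v : L), u ∈ S.grading i → v ∈ S.grading j →
      ∀ (a b : A) (lam mu : ℂ),
        Ψ.app lam (T.brk mu (u ⊗ₜ[ℂ] a) (v ⊗ₜ[ℂ] b))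
          = sg (i * Ψ.parity) • T.brk mu (u ⊗ₜ[ℂ] a) (Ψ.app lam (v ⊗ₜ[ℂ] b))) := by
  have hT : S.IsCurrent T := ⟨hD, hgr, hbrk⟩
  have hΨ : Ψ.MemCentroid :=
    Ψ.memCentroid_of_component hT hZ B fun t => hcent (Ψ.component hT B t)
  exact ⟨hΨ, fun i _ u _ hu _ a b lam mu => hΨ i _ _ (S.tmul_mem_grading hgr hu a) lam mu⟩
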